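/- arXiv:2305.05387 — 7 statements merged into one kernel-verified Lean document; each statement's English description precedes it below -/
import Mathlib

section
/- Let M be a graded A-module, g ∈ G such that every A_e-submodule of M_g is faithful, and K a g-classical weakly prime A-submodule of M. If L is an A_e-submodule of M_g, x ∈ A_e, and I is an ideal of A_e with 0 ≠ xIL ⊆ K, then xL ⊆ K or IL ⊆ K. -/
section GCWP

variable {G : Type*} [AddGroup G] [DecidableEq G]
variable {A : Type*} [Ring A] {M : Type*} [AddCommGroup M] [Module A M]

/-- A submodule is graded (homogeneous) if it is generated by its homogeneous elements. -/
def IsGrSub (ℳ : G → AddSubgroup M) (K : Submodule A M) : Prop :=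
  K ≤ Submodule.span A ((K : Set M) ∩ {m | SetLike.IsHomogeneousElem ℳ m})

/-- `K` is a graded classical weakly prime submodule. -/
def IsGCWP (𝒜 : G → AddSubgroup A) (ℳ : G → AddSubgroup M) (K : Submodule A M) : Prop :=
  K ≠ ⊤ ∧ IsGrSub ℳ K ∧
  ∀ x y : A, SetLike.IsHomogeneousElem 𝒜 x → SetLike.IsHomogeneousElem 𝒜 y →
    ∀ L : Submodule A M, IsGrSub ℳ L →
      (∃ a : A, ∃ l ∈ L, (x * a * y) • l ≠ 0) →
      (∀ a : A, ∀ l ∈ L, (x * a * y) • l ∈ K) →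
      (∀ l ∈ L, x • l ∈ K) ∨ (∀ l ∈ L, y • l ∈ K)

/-- `K` is a graded classical prime submodule. -/
def IsGCP (𝒜 : G → AddSubgroup A) (ℳ : G → AddSubgroup M) (K : Submodule A M) : Prop :=
  K ≠ ⊤ ∧ IsGrSub ℳ K ∧
  ∀ x y : A, SetLike.IsHomogeneousElem 𝒜 x → SetLike.IsHomogeneousElem 𝒜 y →
    ∀ L : Submodule A M, IsGrSub ℳ L →
      (∀ a : A, ∀ l ∈ L, (x * a * y) • l ∈ K) →
      (∀ l ∈ L, x • l ∈ K) ∨ (∀ l ∈ L, y • l ∈ K)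

/-- `(x, y, L)` is a graded classical triple zero of `K`. -/
def TripleZero (K : Submodule A M) (x y : A) (L : Submodule A M) : Prop :=
  (∀ a : A, ∀ l ∈ L, (x * a * y) • l = 0) ∧
    ¬ (∀ l ∈ L, x • l ∈ K) ∧ ¬ (∀ l ∈ L, y • l ∈ K)

/-- `L` is an `A_e`-submodule of `M_g` (as an additive subgroup of `M`). -/
def IsAeSub (𝒜 : G → AddSubgroup A) (ℳ : G → AddSubgroup M) (g : G) (L : AddSubgroup M) : Prop :=
  (L : Set M) ⊆ (ℳ g : Set M) ∧ ∀ a ∈ 𝒜 0, ∀ l ∈ L, a • l ∈ L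

/-- `L` is a faithful `A_e`-module. -/
def AeFaithful (𝒜 : G → AddSubgroup A) (L : AddSubgroup M) : Prop :=
  ∀ a ∈ 𝒜 0, (∀ l ∈ L, a • l = 0) → a = 0

/-- `I` is an ideal of `A_e` (as an additive subgroup of `A`). -/
def IsAeIdeal (𝒜 : G → AddSubgroup A) (I : AddSubgroup A) : Prop :=
  (I : Set A) ⊆ (𝒜 0 : Set A) ∧ ∀ a ∈ 𝒜 0, ∀ r ∈ I, a * r ∈ I ∧ r * a ∈ I

/-- `K` is a `g`-classical weakly prime submodule of `M`. -/
def IsgCWP (𝒜 : G → AddSubgroup A) (ℳ : G → AddSubgroup M) (g : G) (K : Submodule A M) :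
    Prop :=
  IsGrSub ℳ K ∧ ¬ ((ℳ g : Set M) ⊆ (K : Set M)) ∧
  ∀ x ∈ 𝒜 0, ∀ y ∈ 𝒜 0, ∀ L : AddSubgroup M, IsAeSub 𝒜 ℳ g L →
    (∃ a ∈ 𝒜 0, ∃ l ∈ L, (x * a * y) • l ≠ 0) →
    (∀ a ∈ 𝒜 0, ∀ l ∈ L, (x * a * y) • l ∈ K) →
    (∀ l ∈ L, x • l ∈ K) ∨ (∀ l ∈ L, y • l ∈ K)

/-- `P` is a weakly prime (proper) left ideal of `A_e`, given as a subset of `A`. -/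
def IsWeaklyPrimeAe (𝒜 : G → AddSubgroup A) (P : Set A) : Prop :=
  P ⊆ (𝒜 0 : Set A) ∧ ¬ ((𝒜 0 : Set A) ⊆ P) ∧
  (0 : A) ∈ P ∧ (∀ p ∈ P, ∀ q ∈ P, p + q ∈ P) ∧ (∀ p ∈ P, -p ∈ P) ∧
  (∀ a ∈ 𝒜 0, ∀ p ∈ P, a * p ∈ P) ∧
  ∀ I J : AddSubgroup A, IsAeIdeal 𝒜 I → IsAeIdeal 𝒜 J →
    (∃ i ∈ I, ∃ j ∈ J, i * j ≠ 0) → (∀ i ∈ I, ∀ j ∈ J, i * j ∈ P) →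
    (I : Set A) ⊆ P ∨ (J : Set A) ⊆ P

end GCWP

section GW2A
variable {G : Type*} [AddGroup G] [DecidableEq G]
variable {A : Type*} [Ring A] {M : Type*} [AddCommGroup M] [Module A M]

/-- `K` is a graded weakly 2-absorbing submodule. -/
def IsGW2A (𝒜 : G → AddSubgroup A) (ℳ : G → AddSubgroup M) (K : Submodule A M) : Prop :=
  K ≠ ⊤ ∧ IsGrSub ℳ K ∧
  ∀ x y : A, SetLike.IsHomogeneousElem 𝒜 x → SetLike.IsHomogeneousElem 𝒜 y →
    ∀ L : Submodule A M, IsGrSub ℳ L →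
      (∃ a : A, ∃ l ∈ L, (x * a * y) • l ≠ 0) →
      (∀ a : A, ∀ l ∈ L, (x * a * y) • l ∈ K) →
      (∀ l ∈ L, x • l ∈ K) ∨ (∀ l ∈ L, y • l ∈ K) ∨
        (∀ a : A, ∀ m : M, (x * a * y) • m ∈ K)

end GW2A

/-! For `s ∈ I` with `x s L ≠ 0`, the weakly prime condition applied to `(x, s, L)`, using
`x A_e s L ⊆ x I L ⊆ K`, gives `s L ⊆ K` as soon as `x L ⊄ K`. Hence `I` is covered by the two
additive subgroups `{s | x s L = 0}` and `{s | s L ⊆ K}`; it is not contained in the first, and a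
group is never the union of two proper subgroups. -/

namespace AddSubgroup

variable {A M : Type*} [Ring A] [AddCommGroup M] [Module A M]

def smulColon (L N : AddSubgroup M) : AddSubgroup A where
  carrier := {s | ∀ l ∈ L, s • l ∈ N}
  zero_mem' l _ := by simp only [zero_smul, N.zero_mem]
  add_mem' ha hb l hl := by simpa only [add_smul] using N.add_mem (ha l hl) (hb l hl)
  neg_mem' ha l hl := by simpa only [neg_smul] using N.neg_mem (ha l hl)

@[simp]
theorem mem_smulColon {L N : AddSubgroup M} {s : A} :
    s ∈ smulColon L N ↔ ∀ l ∈ L, s • l ∈ N :=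
  Iff.rfl

end AddSubgroup

section gClassicalWeaklyPrime

variable {G : Type*} [AddGroup G]
variable {A : Type*} [Ring A] {M : Type*} [AddCommGroup M] [Module A M]
variable {𝒜 : G → AddSubgroup A} {ℳ : G → AddSubgroup M} {g : G} {K : Submodule A M}

theorem IsgCWP.smul_mem_of_mul_smul_mem [SetLike.GradedOne 𝒜] (hK : IsgCWP 𝒜 ℳ g K)
    {L : AddSubgroup M} (hL : IsAeSub 𝒜 ℳ g L) {x y : A} (hx : x ∈ 𝒜 0) (hy : y ∈ 𝒜 0)
    (hxL : ¬ ∀ l ∈ L, x • l ∈ K) (hne : ∃ l ∈ L, (x * y) • l ≠ 0)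
    (hmem : ∀ a ∈ 𝒜 0, ∀ l ∈ L, (x * a * y) • l ∈ K) :
    ∀ l ∈ L, y • l ∈ K := by
  obtain ⟨l, hl, hxyl⟩ := hne
  refine (hK.2.2 x hx y hy L hL ⟨1, SetLike.one_mem_graded 𝒜, l, hl, ?_⟩ hmem).resolve_left hxL
  rwa [mul_one]

end gClassicalWeaklyPrime

section Theorems

variable {G : Type*} [AddGroup G] [DecidableEq G]
variable {A : Type*} [Ring A] {M : Type*} [AddCommGroup M] [Module A M]
variable (𝒜 : G → AddSubgroup A) (ℳ : G → AddSubgroup M)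
variable [SetLike.GradedMonoid 𝒜] [SetLike.GradedSMul 𝒜 ℳ]
variable [DirectSum.Decomposition 𝒜] [DirectSum.Decomposition ℳ]

theorem stmt1 (g : G) (K : Submodule A M)
    (hK : IsgCWP 𝒜 ℳ g K)
    (L : AddSubgroup M) (hL : IsAeSub 𝒜 ℳ g L)
    (x : A) (hx : x ∈ 𝒜 0) (I : AddSubgroup A) (hI : IsAeIdeal 𝒜 I)
    (hne : ∃ r ∈ I, ∃ l ∈ L, (x * r) • l ≠ 0)
    (hsub : ∀ r ∈ I, ∀ l ∈ L, (x * r) • l ∈ K) :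
    (∀ l ∈ L, x • l ∈ K) ∨ (∀ r ∈ I, ∀ l ∈ L, r • l ∈ K) := by
  refine or_iff_not_imp_left.2 fun hxL => ?_
  let annihilated := (AddSubgroup.smulColon L ⊥).comap (AddMonoidHom.mulLeft x)
  have hcover : (I : Set A) ⊆
      (annihilated : Set A) ∪ (AddSubgroup.smulColon L K.toAddSubgroup : AddSubgroup A) := by
    refine fun s hs => or_iff_not_imp_left.2 fun hsx => ?_
    simp only [annihilated, SetLike.mem_coe, AddSubgroup.mem_comap, AddMonoidHom.coe_mulLeft,
      AddSubgroup.mem_smulColon, AddSubgroup.mem_bot, not_forall] at hsx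
    obtain ⟨l, hl, hxsl⟩ := hsx
    refine hK.smul_mem_of_mul_smul_mem hL hx (hI.1 hs) hxL ⟨l, hl, hxsl⟩ fun a ha m hm => ?_
    simpa only [mul_assoc] using hsub (a * s) (hI.2 a ha s hs).1 m hm
  have hI_not_annihilated : ¬ I ≤ annihilated := by
    obtain ⟨r, hr, l, hl, hxrl⟩ := hne
    exact fun h => hxrl (AddSubgroup.mem_bot.1 (h hr l hl))
  exact (AddSubgroupClass.subset_union.1 hcover).resolve_left hI_not_annihilated

end Theorems
end

section
/- Let M and S be G-graded A-modules and f : M → S an injective graded A-homomorphism. If K is a graded classical weakly prime A-submodule of S with f⁻¹(K) ≠ M, then f⁻¹(K) is a graded classical weakly prime A-submodule of M. -/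
section GradedSubmodule

open DirectSum

variable {G : Type*} [DecidableEq G]
variable {A : Type*} [Ring A] {M : Type*} [AddCommGroup M] [Module A M]
variable {ℳ : G → AddSubgroup M} [Decomposition ℳ]

theorem Submodule.decompose_mem_of_mem_of_mem {p : Submodule A M} {m : M} {i : G}
    (hmi : m ∈ ℳ i) (hmp : m ∈ p) (g : G) : (decompose ℳ m g : M) ∈ p := by
  by_cases hig : i = g
  · subst hig
    rwa [decompose_of_mem_same ℳ hmi]
  · rw [decompose_of_mem_ne ℳ hmi hig]
    exact p.zero_mem

theorem Submodule.IsHomogeneous.isGrSub {K : Submodule A M} (hK : K.IsHomogeneous ℳ) :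
    IsGrSub ℳ K := by
  classical
  intro m hm
  rw [← sum_support_decompose ℳ m]
  exact Submodule.sum_mem _ fun g _ =>
    Submodule.subset_span ⟨hK g hm, g, (decompose ℳ m g).2⟩

theorem IsGrSub.isHomogeneous [Add G] (𝒜 : G → AddSubgroup A) [SetLike.GradedSMul 𝒜 ℳ]
    [Decomposition 𝒜] {K : Submodule A M} (hK : IsGrSub ℳ K) : K.IsHomogeneous ℳ := by
  intro g m hm
  replace hm := hK hm
  induction hm using Submodule.closure_induction generalizing g with
  | zero => simp
  | add x y _ _ hx hy => simpa using K.add_mem (hx g) (hy g)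
  | smul_mem a x hx =>
    obtain ⟨hxK, j, hxj⟩ := hx
    induction a using Decomposition.inductionOn 𝒜 generalizing g with
    | zero => simp
    | homogeneous a =>
      exact K.decompose_mem_of_mem_of_mem (SetLike.GradedSMul.smul_mem a.2 hxj)
        (K.smul_mem _ hxK) g
    | add a b ha hb => simpa [add_smul] using K.add_mem (ha g) (hb g)

theorem map_directSumDecompose_of_map_mem {S : Type*} [AddCommGroup S] {𝒮 : G → AddSubgroup S}
    [Decomposition 𝒮] {F : Type*} [FunLike F M S] [AddMonoidHomClass F M S] (f : F)
    (hf : ∀ g, ∀ m ∈ ℳ g, f m ∈ 𝒮 g) (m : M) (g : G) :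
    f (decompose ℳ m g) = decompose 𝒮 (f m) g := by
  induction m using Decomposition.inductionOn ℳ with
  | zero => simp
  | @homogeneous i m =>
    by_cases hig : i = g
    · subst hig
      rw [decompose_of_mem_same ℳ m.2, decompose_of_mem_same 𝒮 (hf i m m.2)]
    · rw [decompose_of_mem_ne ℳ m.2 hig, decompose_of_mem_ne 𝒮 (hf i m m.2) hig, map_zero]
  | add m m' hm hm' => simp [hm, hm']

theorem Submodule.IsHomogeneous.comap {S : Type*} [AddCommGroup S] [Module A S]
    {𝒮 : G → AddSubgroup S} [Decomposition 𝒮] {K : Submodule A S} (hK : K.IsHomogeneous 𝒮)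
    (f : M →ₗ[A] S) (hf : ∀ g, ∀ m ∈ ℳ g, f m ∈ 𝒮 g) : (K.comap f).IsHomogeneous ℳ := by
  intro g m hm
  rw [Submodule.mem_comap, map_directSumDecompose_of_map_mem f hf]
  exact hK g hm

end GradedSubmodule

section Map

variable {G : Type*}
variable {A : Type*} [Ring A] {M : Type*} [AddCommGroup M] [Module A M]
variable {S : Type*} [AddCommGroup S] [Module A S]

theorem IsGrSub.map {ℳ : G → AddSubgroup M} {𝒮 : G → AddSubgroup S} {L : Submodule A M}
    (hL : IsGrSub ℳ L) (f : M →ₗ[A] S) (hf : ∀ g, ∀ m ∈ ℳ g, f m ∈ 𝒮 g) :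
    IsGrSub 𝒮 (L.map f) := by
  rw [IsGrSub, Submodule.map_le_iff_le_comap]
  refine hL.trans (Submodule.span_le.2 ?_)
  rintro m ⟨hmL, g, hmg⟩
  exact Submodule.subset_span ⟨Submodule.mem_map_of_mem hmL, g, hf g m hmg⟩

theorem Submodule.forall_mem_map_smul_mem_iff (f : M →ₗ[A] S) (L : Submodule A M)
    (K : Submodule A S) (r : A) :
    (∀ s ∈ L.map f, r • s ∈ K) ↔ ∀ l ∈ L, r • l ∈ K.comap f := by
  simp

end Map

section Theorems

variable {G : Type*} [AddGroup G] [DecidableEq G]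
variable {A : Type*} [Ring A] {M : Type*} [AddCommGroup M] [Module A M]
variable (𝒜 : G → AddSubgroup A) (ℳ : G → AddSubgroup M)
variable [SetLike.GradedMonoid 𝒜] [SetLike.GradedSMul 𝒜 ℳ]
variable [DirectSum.Decomposition 𝒜] [DirectSum.Decomposition ℳ]

theorem stmt4 {S : Type*} [AddCommGroup S] [Module A S] (𝒮 : G → AddSubgroup S)
    [SetLike.GradedSMul 𝒜 𝒮] [DirectSum.Decomposition 𝒮]
    (f : M →ₗ[A] S) (hf : Function.Injective f)
    (hgr : ∀ g : G, ∀ m ∈ ℳ g, f m ∈ 𝒮 g)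
    (K : Submodule A S) (hK : IsGCWP 𝒜 𝒮 K) (hproper : K.comap f ≠ ⊤) :
    IsGCWP 𝒜 ℳ (K.comap f) := by
  obtain ⟨-, hKgr, hKprime⟩ := hK
  refine ⟨hproper, ((hKgr.isHomogeneous 𝒜).comap f hgr).isGrSub, ?_⟩
  intro x y hx hy L hL ⟨a, l, hl, hne⟩ hsub
  simp only [← Submodule.forall_mem_map_smul_mem_iff] at hsub ⊢
  refine hKprime x y hx hy (L.map f) (hL.map f hgr) ⟨a, f l, L.mem_map_of_mem hl, ?_⟩ hsub
  rwa [← map_smul, map_ne_zero_iff f hf]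

end Theorems
end

section
/- Let M be a graded A-module and K a proper graded A-submodule of M. If K is a graded weakly 2-absorbing A-submodule of M and (K :_A M) is a graded weakly prime ideal of A, then K is a graded classical weakly prime A-submodule of M. -/
section Theorems

variable {G : Type*} [AddGroup G] [DecidableEq G]
variable {A : Type*} [Ring A] {M : Type*} [AddCommGroup M] [Module A M]
variable (𝒜 : G → AddSubgroup A) (ℳ : G → AddSubgroup M)
variable [SetLike.GradedMonoid 𝒜] [SetLike.GradedSMul 𝒜 ℳ]
variable [DirectSum.Decomposition 𝒜] [DirectSum.Decomposition ℳ]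

theorem stmt8 (K : Submodule A M) (hK : IsGW2A 𝒜 ℳ K)
    (hcolon : ∀ x y : A, SetLike.IsHomogeneousElem 𝒜 x → SetLike.IsHomogeneousElem 𝒜 y →
      (∃ a : A, x * a * y ≠ 0) → (∀ a : A, ∀ m : M, (x * a * y) • m ∈ K) →
      (∀ m : M, x • m ∈ K) ∨ (∀ m : M, y • m ∈ K)) :
    IsGCWP 𝒜 ℳ K := by
  obtain ⟨hK_ne_top, hK_graded, hK_absorbing⟩ := hK
  refine ⟨hK_ne_top, hK_graded, fun x y hx hy L hL hne hxyL => ?_⟩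
  obtain hxL | hyL | hxy := hK_absorbing x y hx hy L hL hne hxyL
  · exact Or.inl hxL
  · exact Or.inr hyL
  · obtain ⟨a, l, -, hxayl⟩ := hne
    exact (hcolon x y hx hy ⟨a, left_ne_zero_of_smul hxayl⟩ hxy).imp
      (fun hxM l _ => hxM l) (fun hyM l _ => hyM l)

end Theorems
end

section
/- Let M be a graded A-module and K a graded classical weakly prime A-submodule of M. If (x, y, L) is a graded classical triple zero of K, then xAyK = 0. -/
/-! Enlarge `L` to `L ⊔ K`, which is still graded. Since `x A y L = 0`, we get `x A y (L ⊔ K) ⊆ K`;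
a nonzero `x a y k` with `k ∈ K` would make `K` absorb `x (L ⊔ K)` or `y (L ⊔ K)`, hence `x L` or `y L`. -/

section

variable {G : Type*} {A : Type*} [Ring A] {M : Type*} [AddCommGroup M] [Module A M]

theorem IsGrSub.le_span_homogeneous_of_le {ℳ : G → AddSubgroup M} {N P : Submodule A M}
    (hN : IsGrSub ℳ N) (hNP : N ≤ P) :
    N ≤ Submodule.span A ((P : Set M) ∩ {m | SetLike.IsHomogeneousElem ℳ m}) :=
  hN.trans <| Submodule.span_mono fun _ hm => ⟨hNP hm.1, hm.2⟩

theorem IsGrSub.sup {ℳ : G → AddSubgroup M} {L K : Submodule A M}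
    (hL : IsGrSub ℳ L) (hK : IsGrSub ℳ K) : IsGrSub ℳ (L ⊔ K) :=
  sup_le (hL.le_span_homogeneous_of_le le_sup_left) (hK.le_span_homogeneous_of_le le_sup_right)

theorem TripleZero.smul_sup_mem {K L : Submodule A M} {x y : A} (htz : TripleZero K x y L)
    (a : A) {m : M} (hm : m ∈ L ⊔ K) : (x * a * y) • m ∈ K := by
  obtain ⟨l, hl, k, hk, rfl⟩ := Submodule.mem_sup.mp hm
  rw [smul_add, htz.1 a l hl, zero_add]
  exact K.smul_mem _ hk

end

section Theorems

variable {G : Type*} [AddGroup G] [DecidableEq G]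
variable {A : Type*} [Ring A] {M : Type*} [AddCommGroup M] [Module A M]
variable (𝒜 : G → AddSubgroup A) (ℳ : G → AddSubgroup M)
variable [SetLike.GradedMonoid 𝒜] [SetLike.GradedSMul 𝒜 ℳ]
variable [DirectSum.Decomposition 𝒜] [DirectSum.Decomposition ℳ]

theorem stmt11 (K : Submodule A M) (hK : IsGCWP 𝒜 ℳ K)
    (x y : A) (hx : SetLike.IsHomogeneousElem 𝒜 x) (hy : SetLike.IsHomogeneousElem 𝒜 y)
    (L : Submodule A M) (hL : IsGrSub ℳ L) (htz : TripleZero K x y L) :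
    ∀ a : A, ∀ k ∈ K, (x * a * y) • k = 0 := by
  intro a k hk
  by_contra hne
  obtain h | h := hK.2.2 x y hx hy (L ⊔ K) (hL.sup hK.2.1)
    ⟨a, k, Submodule.mem_sup_right hk, hne⟩ fun b _ hm => htz.smul_sup_mem b hm
  · exact htz.2.1 fun l hl => h l (Submodule.mem_sup_left hl)
  · exact htz.2.2 fun l hl => h l (Submodule.mem_sup_left hl)

end Theorems
end

section
/- Let M be a graded A-module, K a graded classical weakly prime A-submodule of M, and (x, y, L) a graded classical triple zero of K with y ∈ A_g for some g ∈ G. Then x(K :_{A_g} M)L = 0, where (K :_{A_g} M) = {a ∈ A_g : aM ⊆ K}. -/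
section ColonAbsorption

variable {A : Type*} [Ring A] {M : Type*} [AddCommGroup M] [Module A M]

theorem forall_add_smul_mem_iff {K : Submodule A M} {s : Set M} {y r : A}
    (hr : ∀ m : M, r • m ∈ K) : (∀ l ∈ s, (y + r) • l ∈ K) ↔ ∀ l ∈ s, y • l ∈ K :=
  forall₂_congr fun l _ => by rw [add_smul]; exact K.add_mem_iff_left (hr l)

theorem mul_add_smul_eq_of_mul_smul_eq_zero {x y r a : A} {l : M} (h : (x * a * y) • l = 0) :
    (x * a * (y + r)) • l = (x * a * r) • l := by
  rw [mul_add, add_smul, h, zero_add]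

end ColonAbsorption

section Theorems

variable {G : Type*} [AddGroup G] [DecidableEq G]
variable {A : Type*} [Ring A] {M : Type*} [AddCommGroup M] [Module A M]
variable (𝒜 : G → AddSubgroup A) (ℳ : G → AddSubgroup M)
variable [SetLike.GradedMonoid 𝒜] [SetLike.GradedSMul 𝒜 ℳ]
variable [DirectSum.Decomposition 𝒜] [DirectSum.Decomposition ℳ]

theorem stmt12 (K : Submodule A M) (hK : IsGCWP 𝒜 ℳ K)
    (x y : A) (hx : SetLike.IsHomogeneousElem 𝒜 x) (g : G) (hy : y ∈ 𝒜 g)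
    (L : Submodule A M) (hL : IsGrSub ℳ L) (htz : TripleZero K x y L) :
    ∀ r ∈ 𝒜 g, (∀ m : M, r • m ∈ K) → ∀ l ∈ L, (x * r) • l = 0 := by
  intro r hr hrK l₀ hl₀
  by_contra hxrl₀
  obtain ⟨hxyL, hxL, hyL⟩ := htz
  have hxyrL : ∀ a : A, ∀ l ∈ L, (x * a * (y + r)) • l = (x * a * r) • l :=
    fun a l hl => mul_add_smul_eq_of_mul_smul_eq_zero (hxyL a l hl)
  have hne : ∃ a : A, ∃ l ∈ L, (x * a * (y + r)) • l ≠ 0 :=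
    ⟨1, l₀, hl₀, by rwa [hxyrL 1 l₀ hl₀, mul_one]⟩
  have hmem : ∀ a : A, ∀ l ∈ L, (x * a * (y + r)) • l ∈ K := fun a l hl => by
    rw [hxyrL a l hl, mul_smul]
    exact K.smul_mem _ (hrK l)
  rcases hK.2.2 x (y + r) hx ⟨g, add_mem hy hr⟩ L hL hne hmem with h | h
  · exact hxL h
  · exact hyL ((forall_add_smul_mem_iff hrK).1 h)

end Theorems
end

section
/- Let M be a graded multiplication A-module. If every proper graded A-submodule of M is graded weakly prime, then M has at most two graded maximal A-submodules. -/
section GradedSubmodule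

variable {G : Type*} {A : Type*} [Ring A] {M : Type*} [AddCommGroup M] [Module A M]
variable (𝒜 : G → AddSubgroup A) (ℳ : G → AddSubgroup M)

def IsGrMaximal (X : Submodule A M) : Prop :=
  IsGrSub ℳ X ∧ X ≠ ⊤ ∧ ∀ L : Submodule A M, IsGrSub ℳ L → X < L → L = ⊤

def IsGrWeaklyPrime (K : Submodule A M) : Prop :=
  ∀ I : Ideal A, IsGrSub 𝒜 I → ∀ L : Submodule A M, IsGrSub ℳ L →
    (∃ r ∈ I, ∃ l ∈ L, r • l ≠ 0) → (∀ r ∈ I, ∀ l ∈ L, r • l ∈ K) →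
    L ≤ K ∨ (∀ r ∈ I, ∀ m : M, r • m ∈ K)

variable {𝒜 ℳ}

theorem IsGrSub.sup_s18 {X Y : Submodule A M} (hX : IsGrSub ℳ X) (hY : IsGrSub ℳ Y) :
    IsGrSub ℳ (X ⊔ Y) :=
  sup_le (hX.trans (Submodule.span_mono fun _ hz => ⟨Submodule.mem_sup_left hz.1, hz.2⟩))
    (hY.trans (Submodule.span_mono fun _ hz => ⟨Submodule.mem_sup_right hz.1, hz.2⟩))

theorem IsGrMaximal.not_le {P Q : Submodule A M} (hP : IsGrMaximal ℳ P) (hQ : IsGrMaximal ℳ Q)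
    (hPQ : P ≠ Q) : ¬ P ≤ Q :=
  fun hle => hQ.2.1 (hP.2.2 Q hQ.1 (lt_of_le_of_ne hle hPQ))

theorem IsGrMaximal.sup_eq_top {P Q : Submodule A M} (hP : IsGrMaximal ℳ P)
    (hQ : IsGrMaximal ℳ Q) (hPQ : P ≠ Q) : P ⊔ Q = ⊤ :=
  hP.2.2 _ (hP.1.sup_s18 hQ.1) (left_lt_sup.2 (hQ.not_le hP hPQ.symm))

theorem Submodule.span_ideal_smul_le_iff {I : Ideal A} {K : Submodule A M} :
    Submodule.span A {z : M | ∃ r ∈ I, ∃ m : M, z = r • m} ≤ K ↔ ∀ r ∈ I, ∀ m : M, r • m ∈ K := by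
  rw [Submodule.span_le]
  exact ⟨fun h r hr m => h ⟨r, hr, m, rfl⟩, by rintro h _ ⟨r, hr, m, rfl⟩; exact h r hr m⟩

theorem IsGrMaximal.smul_eq_zero_of_isGrWeaklyPrime_inf {I : Ideal A} {Z Q : Submodule A M}
    (hI : IsGrSub 𝒜 I) (hZI : Z = Submodule.span A {z : M | ∃ r ∈ I, ∃ m : M, z = r • m})
    (hZ : IsGrMaximal ℳ Z) (hQ : IsGrMaximal ℳ Q) (hZQ : Z ≠ Q)
    (hwp : IsGrWeaklyPrime 𝒜 ℳ (Z ⊓ Q)) : ∀ r ∈ I, ∀ l ∈ Q, r • l = 0 := by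
  by_contra! ⟨r, hr, l, hl, hrl⟩
  have hIZ : ∀ r ∈ I, ∀ m : M, r • m ∈ Z := Submodule.span_ideal_smul_le_iff.1 hZI.ge
  rcases hwp I hI Q hQ.1 ⟨r, hr, l, hl, hrl⟩ fun r hr l hl => ⟨hIZ r hr l, Q.smul_mem r hl⟩
    with hQZ | hIQ
  · exact hQ.not_le hZ hZQ.symm (hQZ.trans inf_le_left)
  · exact hZ.not_le hQ hZQ
      (hZI.trans_le (Submodule.span_ideal_smul_le_iff.2 fun r hr m => (hIQ r hr m).2))

end GradedSubmodule

section Decomposition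

open DirectSum SetLike

variable {G : Type*} [DecidableEq G] [Add G]
variable {A : Type*} [Ring A] {M : Type*} [AddCommGroup M] [Module A M]
variable {ℳ : G → AddSubgroup M} [Decomposition ℳ]

theorem Submodule.decompose_smul_mem (𝒜 : G → AddSubgroup A) [Decomposition 𝒜]
    [GradedSMul 𝒜 ℳ] {K : Submodule A M} {m : M} (hm : IsHomogeneousElem ℳ m)
    (hmK : m ∈ K) (a : A) (g : G) : (decompose ℳ (a • m) g : M) ∈ K := by
  classical
  obtain ⟨j, hj⟩ := hm
  rw [← sum_support_decompose 𝒜 a, Finset.sum_smul, decompose_sum, DFinsupp.finsetSum_apply,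
    AddSubmonoidClass.coe_finsetSum]
  refine K.sum_mem fun i _ => ?_
  have hmem : (decompose 𝒜 a i : A) • m ∈ ℳ (i + j) := GradedSMul.smul_mem (decompose 𝒜 a i).2 hj
  rw [decompose_of_mem ℳ hmem, coe_of_apply]
  split_ifs
  · exact K.smul_mem _ hmK
  · exact K.zero_mem

theorem isGrSub_iff_isHomogeneous (𝒜 : G → AddSubgroup A) [Decomposition 𝒜]
    [GradedSMul 𝒜 ℳ] {K : Submodule A M} : IsGrSub ℳ K ↔ K.IsHomogeneous ℳ := by
  classical
  constructor
  · intro hK g m hm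
    obtain ⟨c, hcs, rfl⟩ := Submodule.mem_span_set.1 (hK hm)
    rw [Finsupp.sum, decompose_sum, DFinsupp.finsetSum_apply, AddSubmonoidClass.coe_finsetSum]
    exact K.sum_mem fun z hz => K.decompose_smul_mem 𝒜 (hcs hz).2 (hcs hz).1 _ g
  · intro hK m hm
    rw [← sum_support_decompose ℳ m]
    exact Submodule.sum_mem _ fun g _ => Submodule.subset_span ⟨hK g hm, g, coe_mem _⟩

theorem IsGrSub.inf (𝒜 : G → AddSubgroup A) [Decomposition 𝒜] [GradedSMul 𝒜 ℳ]
    {X Y : Submodule A M} (hX : IsGrSub ℳ X) (hY : IsGrSub ℳ Y) : IsGrSub ℳ (X ⊓ Y) := by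
  rw [isGrSub_iff_isHomogeneous 𝒜] at hX hY ⊢
  exact fun g m hm => ⟨hX g hm.1, hY g hm.2⟩

end Decomposition

section Theorems

variable {G : Type*} [AddGroup G] [DecidableEq G]
variable {A : Type*} [Ring A] {M : Type*} [AddCommGroup M] [Module A M]
variable (𝒜 : G → AddSubgroup A) (ℳ : G → AddSubgroup M)
variable [SetLike.GradedMonoid 𝒜] [SetLike.GradedSMul 𝒜 ℳ]
variable [DirectSum.Decomposition 𝒜] [DirectSum.Decomposition ℳ]

theorem stmt18
    (hmult : ∀ K : Submodule A M, IsGrSub ℳ K → ∃ I : Ideal A, IsGrSub 𝒜 I ∧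
      K = Submodule.span A {z : M | ∃ r ∈ I, ∃ m : M, z = r • m})
    (hwp : ∀ K : Submodule A M, IsGrSub ℳ K → K ≠ ⊤ →
      ∀ I : Ideal A, IsGrSub 𝒜 I → ∀ L : Submodule A M, IsGrSub ℳ L →
        (∃ r ∈ I, ∃ l ∈ L, r • l ≠ 0) → (∀ r ∈ I, ∀ l ∈ L, r • l ∈ K) →
        L ≤ K ∨ (∀ r ∈ I, ∀ m : M, r • m ∈ K)) :
    ∀ X Y Z : Submodule A M,
      (IsGrSub ℳ X ∧ X ≠ ⊤ ∧ ∀ L : Submodule A M, IsGrSub ℳ L → X < L → L = ⊤) →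
      (IsGrSub ℳ Y ∧ Y ≠ ⊤ ∧ ∀ L : Submodule A M, IsGrSub ℳ L → Y < L → L = ⊤) →
      (IsGrSub ℳ Z ∧ Z ≠ ⊤ ∧ ∀ L : Submodule A M, IsGrSub ℳ L → Z < L → L = ⊤) →
      X = Y ∨ X = Z ∨ Y = Z := by
  rintro X Y Z (hX : IsGrMaximal ℳ X) (hY : IsGrMaximal ℳ Y) (hZ : IsGrMaximal ℳ Z)
  by_contra! ⟨hXY, hXZ, hYZ⟩
  obtain ⟨I, hI, hZI⟩ := hmult Z hZ.1
  have hZ_inf : ∀ Q : Submodule A M, IsGrSub ℳ Q → IsGrWeaklyPrime 𝒜 ℳ (Z ⊓ Q) := fun Q hQ =>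
    hwp _ (hZ.1.inf 𝒜 hQ) (ne_top_of_le_ne_top hZ.2.1 inf_le_left)
  have hIX := hZ.smul_eq_zero_of_isGrWeaklyPrime_inf hI hZI hX hXZ.symm (hZ_inf X hX.1)
  have hIY := hZ.smul_eq_zero_of_isGrWeaklyPrime_inf hI hZI hY hYZ.symm (hZ_inf Y hY.1)
  have hZ_bot : Z ≤ ⊥ := hZI.trans_le <| Submodule.span_ideal_smul_le_iff.2 fun r hr m => by
    obtain ⟨x, hx, y, hy, rfl⟩ :=
      Submodule.mem_sup.1 (Submodule.eq_top_iff'.1 (hX.sup_eq_top hY hXY) m)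
    rw [smul_add, hIX r hr x hx, hIY r hr y hy, add_zero]
    exact Submodule.zero_mem _
  exact hZ.not_le hX hXZ.symm (hZ_bot.trans bot_le)

end Theorems
end

section
/- Let A be a graded left Duo ring, M a graded A-module, and K a graded classical weakly prime A-submodule of M. If x, y are homogeneous elements of A and m a homogeneous element of M with 0 ≠ xym ∈ K, then xm ∈ K or ym ∈ K (i.e., K is graded completely classical weakly prime). -/
section LeftDuo

variable {A : Type*} [Ring A]

theorem exists_mul_eq_mul_of_leftDuo (hduo : ∀ I : Ideal A, ∀ r ∈ I, ∀ a : A, r * a ∈ I)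
    (r a : A) : ∃ b, b * r = r * a :=
  Ideal.mem_span_singleton'.mp (hduo _ r (Ideal.mem_span_singleton_self r) a)

theorem mul_mul_mul_mem_span_mul_of_leftDuo
    (hduo : ∀ I : Ideal A, ∀ r ∈ I, ∀ a : A, r * a ∈ I) (x a y c : A) :
    x * a * y * c ∈ Ideal.span {x * y} := by
  obtain ⟨b, hb⟩ := exists_mul_eq_mul_of_leftDuo hduo x a
  obtain ⟨d, hd⟩ := exists_mul_eq_mul_of_leftDuo hduo (x * y) c
  rw [Ideal.mem_span_singleton']
  exact ⟨b * d, by rw [mul_assoc b, hd, ← mul_assoc, ← mul_assoc, hb]⟩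

end LeftDuo

section SpanSingleton

variable {G : Type*} {A : Type*} [Ring A] {M : Type*} [AddCommGroup M] [Module A M]

theorem isGrSub_span_singleton (ℳ : G → AddSubgroup M) {m : M}
    (hm : SetLike.IsHomogeneousElem ℳ m) : IsGrSub ℳ (Submodule.span A {m}) :=
  Submodule.span_le.mpr <| Set.singleton_subset_iff.mpr <|
    Submodule.subset_span ⟨Submodule.mem_span_singleton_self m, hm⟩

theorem Submodule.smul_mem_of_mem_span_singleton (K : Submodule A M) {r s : A} {m : M}
    (hs : s ∈ Ideal.span {r}) (hr : r • m ∈ K) : s • m ∈ K := by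
  obtain ⟨t, rfl⟩ := Ideal.mem_span_singleton'.mp hs
  rw [mul_smul]
  exact K.smul_mem t hr

end SpanSingleton

section Theorems

variable {G : Type*} [AddGroup G] [DecidableEq G]
variable {A : Type*} [Ring A] {M : Type*} [AddCommGroup M] [Module A M]
variable (𝒜 : G → AddSubgroup A) (ℳ : G → AddSubgroup M)
variable [SetLike.GradedMonoid 𝒜] [SetLike.GradedSMul 𝒜 ℳ]
variable [DirectSum.Decomposition 𝒜] [DirectSum.Decomposition ℳ]

/- Apply classical weak primeness to `L = A m`: the duo property gives `x A y (A m) ⊆ A (x y m) ⊆ K`,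
and `x 1 y m ≠ 0` rules out the zero case. -/
theorem stmt19 (hduo : ∀ I : Ideal A, ∀ r ∈ I, ∀ a : A, r * a ∈ I)
    (K : Submodule A M) (hK : IsGCWP 𝒜 ℳ K)
    (x y : A) (hx : SetLike.IsHomogeneousElem 𝒜 x) (hy : SetLike.IsHomogeneousElem 𝒜 y)
    (m : M) (hm : SetLike.IsHomogeneousElem ℳ m)
    (hne : (x * y) • m ≠ 0) (hmem : (x * y) • m ∈ K) :
    x • m ∈ K ∨ y • m ∈ K := by
  have hmL : m ∈ Submodule.span A {m} := Submodule.mem_span_singleton_self m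
  have hxyL : ∀ a : A, ∀ l ∈ Submodule.span A {m}, (x * a * y) • l ∈ K := by
    intro a l hl
    obtain ⟨c, rfl⟩ := Submodule.mem_span_singleton.mp hl
    rw [smul_smul]
    exact K.smul_mem_of_mem_span_singleton (mul_mul_mul_mem_span_mul_of_leftDuo hduo x a y c) hmem
  have hne' : ∃ a : A, ∃ l ∈ Submodule.span A {m}, (x * a * y) • l ≠ 0 :=
    ⟨1, m, hmL, by rwa [mul_one]⟩
  rcases hK.2.2 x y hx hy _ (isGrSub_span_singleton ℳ hm) hne' hxyL with h | h
  · exact Or.inl (h m hmL)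
  · exact Or.inr (h m hmL)

end Theorems
end
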